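/- Let f be a formal power series with f(0) = 0 and f'(0) ≠ 0, and let φ = Rev(x²/f) be the compositional inverse of x²/f(x) (a well-defined power series with zero constant term). Then the composition (x²/f)∘φ = x, and for the hitting-time array V = (xφ'/φ, φ), the inverse Riordan array is V⁻¹ = (2 - x f'(x)/f(x), x²/f(x)). -/

import Mathlib

open PowerSeries Finset

/-- Composition `g ∘ f` of formal power series (valid when `f` has zero constant term). -/
noncomputable def psComp (g f : PowerSeries ℚ) : PowerSeries ℚ :=
  PowerSeries.mk fun n => ∑ k ∈ Finset.range (n + 1),
    PowerSeries.coeff k g * PowerSeries.coeff n (f ^ k)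

namespace HT

lemma coeff_psComp (g f : ℚ⟦X⟧) (n : ℕ) : coeff n (psComp g f)
    = ∑ k ∈ range (n + 1), coeff k g * coeff n (f ^ k) := by
  simp [psComp]

lemma coeff_pow_eq_zero {h : ℚ⟦X⟧} (hh : constantCoeff h = 0) {k n : ℕ} (hn : n < k) :
    coeff n (h ^ k) = 0 := by
  have : (X : ℚ⟦X⟧) ^ k ∣ h ^ k := pow_dvd_pow_of_dvd (X_dvd_iff.2 hh) k
  exact X_pow_dvd_iff.1 this n hn

lemma coeff_eq_of_dvd {a b : ℚ⟦X⟧} {n : ℕ} (h : (X : ℚ⟦X⟧) ^ (n+1) ∣ a - b) :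
    coeff n a = coeff n b := by
  have := X_pow_dvd_iff.1 h n (Nat.lt_succ_self n)
  rw [map_sub, sub_eq_zero] at this
  exact this

lemma aeval_dvd {h : ℚ⟦X⟧} (hh : constantCoeff h = 0) {p : Polynomial ℚ} {N : ℕ}
    (hp : ∀ i < N, p.coeff i = 0) : (X : ℚ⟦X⟧) ^ N ∣ Polynomial.aeval h p := by
  obtain ⟨s, hs⟩ := Polynomial.X_pow_dvd_iff.2 hp
  rw [hs, map_mul, map_pow, Polynomial.aeval_X]
  exact Dvd.dvd.mul_right (pow_dvd_pow_of_dvd (X_dvd_iff.2 hh) N) _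

/-- key approximation lemma -/
lemma psComp_approx {g h : ℚ⟦X⟧} (hh : constantCoeff h = 0) {p : Polynomial ℚ} {N : ℕ}
    (hp : ∀ i < N, p.coeff i = coeff i g) :
    (X : ℚ⟦X⟧) ^ N ∣ psComp g h - Polynomial.aeval h p := by
  have h1 : (X : ℚ⟦X⟧) ^ N ∣ psComp g h - Polynomial.aeval h (trunc N g) := by
    rw [X_pow_dvd_iff]
    intro n hn
    rw [map_sub, coeff_psComp, trunc_apply, map_sum, map_sum, sub_eq_zero]
    have e1 : ∀ k ∈ Finset.Ico 0 N,
        coeff n (Polynomial.aeval h (Polynomial.monomial k (coeff k g)))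
          = coeff k g * coeff n (h ^ k) := by
      intro k _
      rw [Polynomial.aeval_monomial, ← C_eq_algebraMap, coeff_C_mul]
    rw [Finset.sum_congr rfl e1, Nat.Ico_zero_eq_range]
    exact Finset.sum_subset (Finset.range_subset_range.2 hn)
      (fun k _ hk => by rw [coeff_pow_eq_zero hh (by simpa using hk), mul_zero])
  have h2 : (X : ℚ⟦X⟧) ^ N ∣ Polynomial.aeval h (trunc N g) - Polynomial.aeval h p := by
    rw [← map_sub]
    apply aeval_dvd hh
    intro i hi
    rw [Polynomial.coeff_sub, coeff_trunc, if_pos hi, hp i hi, sub_self]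
  simpa using dvd_add h1 h2


lemma psComp_mul {g₁ g₂ h : ℚ⟦X⟧} (hh : constantCoeff h = 0) :
    psComp (g₁ * g₂) h = psComp g₁ h * psComp g₂ h := by
  ext n
  apply coeff_eq_of_dvd
  set N := n + 1
  have h1 : (X : ℚ⟦X⟧) ^ N ∣ psComp (g₁ * g₂) h
      - Polynomial.aeval h (trunc N g₁ * trunc N g₂) := by
    apply psComp_approx hh
    intro i hi
    rw [Polynomial.coeff_mul, coeff_mul]
    apply Finset.sum_congr rfl
    intro p hp
    rw [Finset.HasAntidiagonal.mem_antidiagonal] at hp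
    rw [coeff_trunc, coeff_trunc, if_pos (by omega), if_pos (by omega)]
  have h2 : (X : ℚ⟦X⟧) ^ N ∣ Polynomial.aeval h (trunc N g₁ * trunc N g₂)
      - psComp g₁ h * psComp g₂ h := by
    rw [map_mul]
    have d1 := psComp_approx hh (p := trunc N g₁) (N := N)
      (fun i hi => by rw [coeff_trunc, if_pos hi])
    have d2 := psComp_approx hh (p := trunc N g₂) (N := N)
      (fun i hi => by rw [coeff_trunc, if_pos hi])
    have : Polynomial.aeval h (trunc N g₁) * Polynomial.aeval h (trunc N g₂)
        - psComp g₁ h * psComp g₂ h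
        = -(psComp g₁ h - Polynomial.aeval h (trunc N g₁)) * Polynomial.aeval h (trunc N g₂)
          - psComp g₁ h * (psComp g₂ h - Polynomial.aeval h (trunc N g₂)) := by ring
    rw [this]
    exact dvd_sub (Dvd.dvd.mul_right (dvd_neg.2 d1) _) (Dvd.dvd.mul_left d2 _)
  simpa using dvd_add h1 h2

lemma psComp_add (g₁ g₂ h : ℚ⟦X⟧) :
    psComp (g₁ + g₂) h = psComp g₁ h + psComp g₂ h := by
  ext n
  simp [coeff_psComp, add_mul, Finset.sum_add_distrib]

lemma psComp_one {h : ℚ⟦X⟧} (hh : constantCoeff h = 0) : psComp 1 h = 1 := by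
  ext n
  apply coeff_eq_of_dvd
  have := psComp_approx hh (g := 1) (p := 1) (N := n + 1)
    (fun i hi => by rw [Polynomial.coeff_one, coeff_one])
  simpa using this

lemma psComp_C {h : ℚ⟦X⟧} (c : ℚ) (hh : constantCoeff h = 0) :
    psComp (C c) h = C c := by
  ext n
  apply coeff_eq_of_dvd
  have := psComp_approx hh (g := C c) (p := Polynomial.C c) (N := n + 1)
    (fun i hi => by rw [Polynomial.coeff_C, coeff_C])
  simpa [C_eq_algebraMap] using this

/-- Composition with a fixed `h` (zero constant term) as an algebra hom in the outer series. -/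
noncomputable def compAlgHom (h : ℚ⟦X⟧) (hh : constantCoeff h = 0) : ℚ⟦X⟧ →ₐ[ℚ] ℚ⟦X⟧ where
  toFun g := psComp g h
  map_one' := psComp_one hh
  map_mul' g₁ g₂ := psComp_mul hh
  map_zero' := by ext n; simp [coeff_psComp]
  map_add' := psComp_add (h := h)
  commutes' c := by rw [← C_eq_algebraMap]; exact psComp_C c hh

@[simp] lemma compAlgHom_apply (h : ℚ⟦X⟧) (hh) (g : ℚ⟦X⟧) :
    compAlgHom h hh g = psComp g h := rfl

lemma psComp_X {h : ℚ⟦X⟧} (hh : constantCoeff h = 0) : psComp X h = h := by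
  ext n
  apply coeff_eq_of_dvd
  have := psComp_approx hh (g := X) (p := Polynomial.X) (N := n + 1)
    (fun i hi => by rw [Polynomial.coeff_X, coeff_X]; rcases eq_or_ne i 1 with h' | h' <;> simp [h', Ne.symm])
  simpa using this

lemma psComp_X_right (g : ℚ⟦X⟧) : psComp g X = g := by
  ext n
  rw [coeff_psComp]
  simp [coeff_X_pow, Finset.sum_ite_eq']

lemma constantCoeff_psComp (g h : ℚ⟦X⟧) :
    constantCoeff (psComp g h) = constantCoeff g := by
  have := coeff_psComp g h 0
  simpa [coeff_zero_eq_constantCoeff] using this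


lemma dvd_map_algHom {h : ℚ⟦X⟧} (hh : constantCoeff h = 0) {a b : ℚ⟦X⟧} {N : ℕ}
    (hd : (X : ℚ⟦X⟧) ^ N ∣ a - b) :
    (X : ℚ⟦X⟧) ^ N ∣ psComp a h - psComp b h := by
  obtain ⟨e, he⟩ := hd
  have e0 : psComp a h - psComp b h = psComp (X ^ N * e) h := by
    have := map_sub (compAlgHom h hh) a b
    simp only [compAlgHom_apply] at this
    rw [← this, ← he]
  have e2 : psComp ((X:ℚ⟦X⟧) ^ N) h = h ^ N := by
    have := map_pow (compAlgHom h hh) X N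
    simp only [compAlgHom_apply] at this
    rw [this, psComp_X hh]
  rw [e0, psComp_mul hh, e2]
  exact Dvd.dvd.mul_right (pow_dvd_pow_of_dvd (X_dvd_iff.2 hh) N) _

lemma psComp_assoc {g f h : ℚ⟦X⟧} (hf : constantCoeff f = 0)
    (hh : constantCoeff h = 0) :
    psComp (psComp g f) h = psComp g (psComp f h) := by
  have hfh : constantCoeff (psComp f h) = 0 := by rw [constantCoeff_psComp, hf]
  ext n
  apply coeff_eq_of_dvd
  set N := n + 1
  have d1 : (X : ℚ⟦X⟧) ^ N ∣ psComp g f - Polynomial.aeval f (trunc N g) :=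
    psComp_approx hf (fun i hi => by rw [coeff_trunc, if_pos hi])
  have d2 : (X : ℚ⟦X⟧) ^ N ∣ psComp (psComp g f) h
      - psComp (Polynomial.aeval f (trunc N g)) h := dvd_map_algHom hh d1
  have e1 : psComp (Polynomial.aeval f (trunc N g)) h
      = Polynomial.aeval (psComp f h) (trunc N g) := by
    rw [← compAlgHom_apply h hh, ← Polynomial.aeval_algHom_apply, compAlgHom_apply]
  have d3 : (X : ℚ⟦X⟧) ^ N ∣ psComp g (psComp f h)
      - Polynomial.aeval (psComp f h) (trunc N g) :=
    psComp_approx hfh (fun i hi => by rw [coeff_trunc, if_pos hi])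
  rw [e1] at d2
  have := dvd_sub d2 d3
  simpa using dvd_sub d2 d3

lemma psComp_injective {u : ℚ⟦X⟧} (hu0 : constantCoeff u = 0)
    (hu1 : coeff 1 u ≠ 0) {g₁ g₂ : ℚ⟦X⟧} (hg : psComp g₁ u = psComp g₂ u) : g₁ = g₂ := by
  by_contra hne
  have hd : g₁ - g₂ ≠ 0 := sub_ne_zero.2 hne
  have hex : ∃ m, coeff m (g₁ - g₂) ≠ 0 := by
    by_contra hc
    push_neg at hc
    exact hd (PowerSeries.ext fun n => by simpa using hc n)
  set d := g₁ - g₂ with hdef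
  set m := Nat.find hex with hm
  have hm1 : coeff m d ≠ 0 := Nat.find_spec hex
  have hm2 : ∀ k < m, coeff k d = 0 := fun k hk => by
    have := Nat.find_min hex hk
    simpa using this
  -- psComp d u = 0
  have hz : psComp d u = 0 := by
    have := map_sub (compAlgHom u hu0) g₁ g₂
    simp only [compAlgHom_apply] at this
    rw [hdef, this, hg, sub_self]
  -- coeff m (u ^ m) = (coeff 1 u) ^ m
  obtain ⟨v, hv⟩ := X_dvd_iff.2 hu0
  have hv0 : constantCoeff v = coeff 1 u := by
    rw [hv, ← coeff_zero_eq_constantCoeff, ← coeff_succ_X_mul]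
  have hum : coeff m (u ^ m) = (coeff 1 u) ^ m := by
    have step : coeff m (u ^ m) = (constantCoeff v) ^ m := by
      rw [hv, mul_pow]
      have : coeff m ((X:ℚ⟦X⟧) ^ m * v ^ m) = coeff 0 (v ^ m) := by
        simpa using coeff_X_pow_mul (v ^ m) m 0
      rw [this, coeff_zero_eq_constantCoeff, map_pow]
    rw [step, hv0]
  have hcm : coeff m (psComp d u) = coeff m d * (coeff 1 u) ^ m := by
    rw [coeff_psComp, Finset.sum_range_succ, hum]
    have : ∀ k ∈ Finset.range m, coeff k d * coeff m (u ^ k) = 0 := by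
      intro k hk
      rw [hm2 k (Finset.mem_range.1 hk), zero_mul]
    rw [Finset.sum_congr rfl this, Finset.sum_const_zero, zero_add]
  rw [hz, map_zero] at hcm
  exact hm1 (by
    have := hcm.symm
    rcases mul_eq_zero.1 this with h | h
    · exact h
    · exact absurd h (pow_ne_zero m hu1))


lemma derivative_psComp {g h : ℚ⟦X⟧} (hh : constantCoeff h = 0) :
    PowerSeries.derivative ℚ (psComp g h)
      = psComp (PowerSeries.derivative ℚ g) h * PowerSeries.derivative ℚ h := by
  ext n
  apply coeff_eq_of_dvd
  have d1 : (X : ℚ⟦X⟧) ^ (n+2) ∣ psComp g h - Polynomial.aeval h (trunc (n+2) g) :=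
    psComp_approx hh (fun i hi => by rw [coeff_trunc, if_pos hi])
  obtain ⟨e, he⟩ := d1
  have hAB : PowerSeries.derivative ℚ (psComp g h)
      - PowerSeries.derivative ℚ (Polynomial.aeval h (trunc (n+2) g))
      = PowerSeries.derivative ℚ ((X:ℚ⟦X⟧)^(n+2) * e) := by
    rw [← map_sub, ← he]
  have hAB2 : (X : ℚ⟦X⟧) ^ (n+1) ∣ PowerSeries.derivative ℚ ((X:ℚ⟦X⟧)^(n+2) * e) := by
    have : PowerSeries.derivative ℚ ((X:ℚ⟦X⟧)^(n+2) * e)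
        = (X:ℚ⟦X⟧)^(n+1) * (X * PowerSeries.derivative ℚ e + ((n:ℚ⟦X⟧)+2) * e) := by
      rw [Derivation.leibniz, Derivation.leibniz_pow, derivative_X]
      simp only [smul_eq_mul, nsmul_eq_mul, mul_one, show n + 2 - 1 = n + 1 from rfl,
        Nat.cast_add, Nat.cast_ofNat]
      ring
    rw [this]
    exact dvd_mul_right _ _
  have hB : PowerSeries.derivative ℚ (Polynomial.aeval h (trunc (n+2) g))
      = Polynomial.aeval h (trunc (n+1) (PowerSeries.derivative ℚ g))
        * PowerSeries.derivative ℚ h := by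
    rw [Derivation.map_aeval, smul_eq_mul, ← trunc_derivative]
  have d3 : (X : ℚ⟦X⟧) ^ (n+1) ∣ psComp (PowerSeries.derivative ℚ g) h
      - Polynomial.aeval h (trunc (n+1) (PowerSeries.derivative ℚ g)) :=
    psComp_approx hh (fun i hi => by rw [coeff_trunc, if_pos hi])
  have key : PowerSeries.derivative ℚ (psComp g h)
      - psComp (PowerSeries.derivative ℚ g) h * PowerSeries.derivative ℚ h
      = (PowerSeries.derivative ℚ (psComp g h)
          - PowerSeries.derivative ℚ (Polynomial.aeval h (trunc (n+2) g)))
        - (psComp (PowerSeries.derivative ℚ g) h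
            - Polynomial.aeval h (trunc (n+1) (PowerSeries.derivative ℚ g)))
          * PowerSeries.derivative ℚ h := by
    rw [hB]; ring
  rw [key, hAB]
  exact dvd_sub hAB2 (Dvd.dvd.mul_right d3 _)

end HT

open HT

theorem hitting_time_inverse (f u φ w q : PowerSeries ℚ)
    (hf0 : PowerSeries.constantCoeff f = 0) (hf1 : PowerSeries.coeff 1 f ≠ 0)
    (hu : u * f = X ^ 2)
    (hφ0 : PowerSeries.constantCoeff φ = 0)
    (hφ : psComp φ u = X)
    (hw : w * φ = X * (PowerSeries.derivative ℚ φ))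
    (hq : q * f = X * (PowerSeries.derivative ℚ f)) :
    psComp u φ = X ∧ w * psComp (2 - q) φ = 1 := by
  have hu0 : constantCoeff u = 0 := by
    have h1 := congrArg (coeff 1) hu
    rw [coeff_mul, Finset.Nat.sum_antidiagonal_eq_sum_range_succ_mk] at h1
    simp [Finset.sum_range_succ, hf0, coeff_X_pow] at h1
    rcases h1 with h | h
    · exact h
    · exact absurd h hf1
  have hu1 : coeff 1 u ≠ 0 := by
    have h2 := congrArg (coeff 2) hu
    rw [coeff_mul, Finset.Nat.sum_antidiagonal_eq_sum_range_succ_mk] at h2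
    simp [Finset.sum_range_succ, hf0, hu0, coeff_X_pow] at h2
    intro h
    rw [h] at h2
    simp at h2
  have hφ1 : coeff 1 φ ≠ 0 := by
    have h1 := congrArg (coeff 1) hφ
    rw [coeff_psComp] at h1
    simp [Finset.sum_range_succ, hφ0, coeff_zero_eq_constantCoeff] at h1
    intro h
    rw [h] at h1
    simp at h1
  have part1 : psComp u φ = X := by
    apply psComp_injective hu0 hu1 (g₁ := psComp u φ) (g₂ := X)
    rw [psComp_assoc hφ0 hu0, hφ, psComp_X_right, psComp_X hu0]
  refine ⟨part1, ?_⟩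
  have hmul : ∀ a b : ℚ⟦X⟧, psComp (a*b) φ = psComp a φ * psComp b φ :=
    fun a b => psComp_mul hφ0
  have hSX : psComp X φ = φ := psComp_X hφ0
  have hXSf : X * psComp f φ = φ^2 := by
    have : psComp (u * f) φ = psComp ((X:ℚ⟦X⟧)^2) φ := by rw [hu]
    rw [hmul, part1, show ((X:ℚ⟦X⟧)^2) = X*X by ring, hmul, hSX] at this
    rw [this]; ring
  have hSq : psComp q φ * psComp f φ = φ * psComp (PowerSeries.derivative ℚ f) φ := by
    have : psComp (q * f) φ = psComp (X * PowerSeries.derivative ℚ f) φ := by rw [hq]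
    rw [hmul, hmul, hSX] at this
    exact this
  have chain : PowerSeries.derivative ℚ (psComp f φ)
      = psComp (PowerSeries.derivative ℚ f) φ * PowerSeries.derivative ℚ φ :=
    derivative_psComp hφ0
  have E : psComp f φ + X * PowerSeries.derivative ℚ (psComp f φ)
      = 2 * φ * PowerSeries.derivative ℚ φ := by
    have hD := congrArg (fun z => PowerSeries.derivative ℚ z) hXSf
    simp only [Derivation.leibniz, Derivation.leibniz_pow, smul_eq_mul, nsmul_eq_mul,
      derivative_X, mul_one, Nat.cast_ofNat, pow_one] at hD
    linear_combination hD
  have E2 : φ^2 + X^2 * psComp (PowerSeries.derivative ℚ f) φ * PowerSeries.derivative ℚ φ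
      = 2*X*φ*PowerSeries.derivative ℚ φ := by
    rw [chain] at E
    linear_combination X * E - hXSf
  have hφne : φ ≠ 0 := fun h => hφ1 (by rw [h]; simp)
  have hfne : f ≠ 0 := fun h => hf1 (by rw [h]; simp)
  have hSfne : psComp f φ ≠ 0 := by
    intro h
    apply hfne
    apply psComp_injective hφ0 hφ1 (g₁ := f) (g₂ := 0)
    rw [h]
    ext n; simp [coeff_psComp]
  have hXne : (X : ℚ⟦X⟧) ≠ 0 := X_ne_zero
  have hc : X * φ * psComp f φ ≠ 0 := mul_ne_zero (mul_ne_zero hXne hφne) hSfne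
  have hS2q : psComp (2 - q) φ = 2 - psComp q φ := by
    have hsub := map_sub (compAlgHom φ hφ0) 2 q
    simp only [compAlgHom_apply] at hsub
    rw [hsub]
    congr 1
    rw [show ((2:ℚ⟦X⟧)) = 1 + 1 by norm_num, psComp_add, psComp_one hφ0]
  rw [hS2q]
  apply mul_right_cancel₀ hc
  linear_combination (2*X*psComp f φ - X*psComp q φ*psComp f φ)*hw
    + (-(X^2*PowerSeries.derivative ℚ φ))*hSq
    + (2*X*PowerSeries.derivative ℚ φ - φ)*hXSf + (-φ)*E2
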